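/- Let φ be a CNF formula over the propositional variables X_1, …, X_k. Then there exists a deterministic finite automaton A over the two-letter alphabet {0, 1} such that the number of words w ∈ {0, 1}^k of length k that are reset words for A equals the number of assignments α : {X_1, …, X_k} → {true, false} that satisfy φ. -/

import Mathlib

/-- The extension `δ*` of a transition function `δ` to words. -/
def deltaStar {Q A : Type*} (δ : Q → A → Q) (q : Q) (w : List A) : Q :=
  w.foldl δ q

/-- A word `w` is a reset word for the automaton with transition function `δ`. -/
def IsResetWord {Q A : Type*} (δ : Q → A → Q) (w : List A) : Prop :=
  ∃ p : Q, ∀ q : Q, deltaStar δ q w = p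

/-- A clause over variables `X_1, …, X_k` is a finite set of literals; the literal
`(j, true)` stands for `X_j`, and `(j, false)` for `¬X_j`. -/
abbrev Clause (k : ℕ) := Finset (Fin k × Bool)

/-- An assignment satisfies a clause if it makes at least one of its literals true. -/
def SatClause {k : ℕ} (α : Fin k → Bool) (C : Clause k) : Prop :=
  ∃ l ∈ C, α l.1 = l.2

/-- An assignment satisfies a CNF formula if it satisfies every clause. -/
def SatCNF {n k : ℕ} (α : Fin k → Bool) (φ : Fin n → Clause k) : Prop :=
  ∀ i : Fin n, SatClause α (φ i)

/-!
Each clause `C_i` of `φ` gets a chain of states `(i, 0), …, (i, k)`; reading letter `b` in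
state `(i, j)` checks the literal `(X_j, b)`: if it lies in `C_i` the automaton falls into an
absorbing sink, otherwise it moves on to `(i, j + 1)`, and `(i, k)` (the clause was falsified)
falls into the sink on the next letter. A word of length `k` started in `(i, j)` with `j > 0`
runs past the end of the chain, so it always reaches the sink; started in `(i, 0)` it reaches
the sink iff, read as an assignment, it satisfies `C_i`. Hence the reset words of length `k`
are exactly the satisfying assignments.
-/

lemma deltaStar_cons {Q A : Type*} (δ : Q → A → Q) (q : Q) (a : A) (w : List A) :
    deltaStar δ q (a :: w) = deltaStar δ (δ q a) w := rfl

lemma deltaStar_conj {Q Q' A : Type*} (e : Q ≃ Q') (δ : Q → A → Q) (q : Q) (w : List A) :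
    deltaStar (fun q a => e (δ (e.symm q) a)) (e q) w = e (deltaStar δ q w) := by
  induction w generalizing q with
  | nil => rfl
  | cons a w ih => simpa only [deltaStar_cons, Equiv.symm_apply_apply] using ih (δ q a)

lemma isResetWord_conj_iff {Q Q' A : Type*} (e : Q ≃ Q') (δ : Q → A → Q) (w : List A) :
    IsResetWord (fun q a => e (δ (e.symm q) a)) w ↔ IsResetWord δ w := by
  constructor
  · rintro ⟨p, hp⟩
    exact ⟨e.symm p, fun q => e.injective (by rw [← deltaStar_conj, hp, e.apply_symm_apply])⟩
  · rintro ⟨p, hp⟩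
    exact ⟨e p, fun q => by rw [← e.apply_symm_apply q, deltaStar_conj, hp]⟩

lemma deltaStar_of_absorbing {Q A : Type*} {δ : Q → A → Q} {s : Q} (hs : ∀ a, δ s a = s)
    (w : List A) : deltaStar δ s w = s := by
  induction w with
  | nil => rfl
  | cons a w ih => rw [deltaStar_cons, hs, ih]

lemma isResetWord_iff_of_absorbing {Q A : Type*} {δ : Q → A → Q} {s : Q}
    (hs : ∀ a, δ s a = s) (w : List A) :
    IsResetWord δ w ↔ ∀ q, deltaStar δ q w = s :=
  ⟨fun ⟨_, hp⟩ q => (hp q).trans ((hp s).symm.trans (deltaStar_of_absorbing hs w)),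
    fun h => ⟨s, h⟩⟩

lemma card_length_eq_and_eq_card_ofFn {A : Type*} (k : ℕ) (P : List A → Prop) :
    Nat.card {w : List A // w.length = k ∧ P w} =
      Nat.card {α : Fin k → A // P (List.ofFn α)} :=
  Nat.card_congr <| (Equiv.subtypeSubtypeEquivSubtypeInter (·.length = k) P).symm.trans <|
    (Equiv.vectorEquivFin A k).subtypeEquiv fun v => by
      show P v.toList ↔ P (List.ofFn v.get)
      rw [← List.Vector.toList_ofFn, List.Vector.ofFn_get]

namespace ClauseAutomaton

variable {ι : Type*} {k : ℕ}

/-- `none` is the sink; `some (i, j)` is the state of clause `i` about to read `X_j`. -/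
def step (φ : ι → Clause k) : Option (ι × Fin (k + 1)) → Bool → Option (ι × Fin (k + 1))
  | some (i, j), b =>
    if h : (j : ℕ) < k then
      if (⟨j, h⟩, b) ∈ φ i then none else some (i, ⟨j + 1, by omega⟩)
    else none
  | none, _ => none

lemma deltaStar_none (φ : ι → Clause k) (w : List Bool) : deltaStar (step φ) none w = none :=
  deltaStar_of_absorbing (fun _ => rfl) w

lemma deltaStar_eq_none_iff (φ : ι → Clause k) (i : ι) (j : Fin (k + 1)) (w : List Bool) :
    deltaStar (step φ) (some (i, j)) w = none ↔
      k < j + w.length ∨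
        ∃ m, ∃ hm : m < w.length, ∃ hk : j + m < k, (⟨j + m, hk⟩, w[m]) ∈ φ i := by
  induction w generalizing j with
  | nil => simpa [deltaStar] using j.is_le
  | cons a w ih =>
    rw [deltaStar_cons]
    by_cases hj : (j : ℕ) < k
    · by_cases hmem : ((⟨j, hj⟩ : Fin k), a) ∈ φ i
      · simp only [step, hj, hmem, dite_true, if_true, deltaStar_none, true_iff]
        exact Or.inr ⟨0, by simp, hj, by simpa using hmem⟩
      · simp only [step, hj, hmem, dite_true, if_false, ih]
        refine or_congr (by simp only [List.length_cons]; omega) ⟨?_, ?_⟩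
        · rintro ⟨m, hm, hk, h⟩
          exact ⟨m + 1, by simpa using hm, by omega, by
            rw [List.getElem_cons_succ]; convert h using 3; omega⟩
        · rintro ⟨_ | m, hm, hk, h⟩
          · exact absurd (by simpa using h) hmem
          · rw [List.getElem_cons_succ] at h
            exact ⟨m, by simpa using hm, by omega, by convert h using 3; omega⟩
    · simp only [step, hj, dite_false, deltaStar_none, true_iff, List.length_cons]
      omega

lemma isResetWord_ofFn_iff (φ : ι → Clause k) (α : Fin k → Bool) :
    IsResetWord (step φ) (List.ofFn α) ↔ ∀ i, SatClause α (φ i) := by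
  simp only [isResetWord_iff_of_absorbing (δ := step φ) (s := none) (fun _ => rfl),
    Option.forall, deltaStar_none, Prod.forall, deltaStar_eq_none_iff, List.length_ofFn,
    List.getElem_ofFn, true_and]
  refine forall_congr' fun i => ⟨fun h => ?_, fun h j => ?_⟩
  · obtain hk | ⟨m, hm, hk, hmem⟩ := h 0
    · simp at hk
    · exact ⟨_, hmem, by simp⟩
  · rcases Nat.eq_zero_or_pos j with hj | hj
    · obtain ⟨⟨⟨m, hm⟩, b⟩, hl, hb⟩ := h
      exact Or.inr ⟨m, hm, by omega, by convert hl using 3; simp_all⟩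
    · exact Or.inl (by omega)

end ClauseAutomaton


/-- A parsimonious reduction from #SAT: for every CNF formula `φ` over `X_1, …, X_k`
there is a DFA over `{0,1}` whose number of reset words of length `k` equals the number
of satisfying assignments of `φ`. -/
theorem counting_reset_words (n k : ℕ) (φ : Fin n → Clause k) :
    ∃ (N : ℕ) (δ : Fin N → Bool → Fin N),
      Nat.card {w : List Bool // w.length = k ∧ IsResetWord δ w} =
        Nat.card {α : Fin k → Bool // SatCNF α φ} := by
  let e := Fintype.equivFin (Option (Fin n × Fin (k + 1)))
  refine ⟨_, fun q a => e (ClauseAutomaton.step φ (e.symm q) a), ?_⟩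
  simp only [card_length_eq_and_eq_card_ofFn, isResetWord_conj_iff,
    ClauseAutomaton.isResetWord_ofFn_iff]
  rfl
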